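/- Let G be a gyrogroup with a gyronorm and gyronorm metric d(x,y) = ‖⊖x ⊕ y‖. Then the following are equivalent: (I) the commutative-like condition ‖(a ⊕ x) ⊕ gyr[a,x](y ⊖ a)‖ = ‖x ⊕ y‖ holds for all a, x, y ∈ G; (II) d is bi-gyrotranslation invariant, i.e., d(x ⊕ a, y ⊕ a) = d(x, y) = d(a ⊕ x, a ⊕ y) for all a, x, y ∈ G. -/

import Mathlib

/-- A gyrogroup: a set with a binary operation `add`, identity `e`, inversion `neg`,
and gyroautomorphisms `gyr` satisfying the gyrogroup axioms. -/
structure Gyrogroup (G : Type*) where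
  add : G → G → G
  e : G
  neg : G → G
  gyr : G → G → G → G
  e_add : ∀ a, add e a = a
  add_e : ∀ a, add a e = a
  neg_add : ∀ a, add (neg a) a = e
  add_neg : ∀ a, add a (neg a) = e
  gyr_bijective : ∀ a b, Function.Bijective (gyr a b)
  gyr_add : ∀ a b x y, gyr a b (add x y) = add (gyr a b x) (gyr a b y)
  left_gyroassoc : ∀ a b c, add a (add b c) = add (add a b) (gyr a b c)
  left_loop : ∀ a b, gyr (add a b) b = gyr a b

/-- A gyronorm on a gyrogroup. -/
structure Gyronorm {G : Type*} (gg : Gyrogroup G) where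
  toFun : G → ℝ
  nonneg : ∀ x, 0 ≤ toFun x
  eq_zero_iff : ∀ x, toFun x = 0 ↔ x = gg.e
  neg_eq : ∀ x, toFun (gg.neg x) = toFun x
  subadd : ∀ x y, toFun (gg.add x y) ≤ toFun x + toFun y
  gyr_eq : ∀ a b x, toFun (gg.gyr a b x) = toFun x

/-!
Left gyrotranslations preserve the gyronorm metric in every gyronormed gyrogroup: by the gyrator
identity `⊖(a ⊕ b) ⊕ (a ⊕ (b ⊕ c)) = gyr[a,b] c` and gyr-invariance of the norm,
`‖⊖(a ⊕ b) ⊕ c‖ = ‖⊖b ⊕ (⊖a ⊕ c)‖`. The same identity turns right invariance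
`d(x ⊕ a, y ⊕ a) = d(x, y)` into `‖⊖a ⊕ (⊖x ⊕ (y ⊕ a))‖ = ‖⊖x ⊕ y‖`, which is the
commutative-like condition at `(⊖a, ⊖x, y)` once its left side is reassociated by the left
gyroassociative law.
-/

namespace Gyrogroup

variable {G : Type*} (gg : Gyrogroup G)

theorem left_cancel {a b c : G} (h : gg.add a b = gg.add a c) : b = c := by
  have h' := congrArg (gg.add (gg.neg a)) h
  rw [gg.left_gyroassoc, gg.left_gyroassoc, gg.neg_add, gg.e_add, gg.e_add] at h'
  exact (gg.gyr_bijective _ _).1 h'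

theorem gyr_e_left (a c : G) : gg.gyr gg.e a c = c := by
  have h := gg.left_gyroassoc gg.e a c
  rw [gg.e_add, gg.e_add] at h
  exact (gg.left_cancel h).symm

theorem gyr_neg_self (a c : G) : gg.gyr (gg.neg a) a c = c := by
  rw [← gg.left_loop, gg.neg_add, gg.gyr_e_left]

theorem neg_add_cancel_left (a b : G) : gg.add (gg.neg a) (gg.add a b) = b := by
  rw [gg.left_gyroassoc, gg.neg_add, gg.e_add, gg.gyr_neg_self]

theorem neg_neg (a : G) : gg.neg (gg.neg a) = a :=
  gg.left_cancel (a := gg.neg a) (by rw [gg.add_neg, gg.neg_add])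

theorem add_neg_cancel_left (a b : G) : gg.add a (gg.add (gg.neg a) b) = b := by
  simpa only [gg.neg_neg] using gg.neg_add_cancel_left (gg.neg a) b

theorem neg_add_add_add (a b c : G) :
    gg.add (gg.neg (gg.add a b)) (gg.add a (gg.add b c)) = gg.gyr a b c := by
  rw [gg.left_gyroassoc a b c, gg.neg_add_cancel_left]

end Gyrogroup

namespace Gyronorm

variable {G : Type*} {gg : Gyrogroup G} (nm : Gyronorm gg)

theorem toFun_neg_add_add (a b c : G) :
    nm.toFun (gg.add (gg.neg (gg.add a b)) c) =
      nm.toFun (gg.add (gg.neg b) (gg.add (gg.neg a) c)) := by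
  conv_lhs => rw [← gg.add_neg_cancel_left a c, ← gg.add_neg_cancel_left b (gg.add (gg.neg a) c),
    gg.neg_add_add_add, nm.gyr_eq]

theorem toFun_neg_add_add_left (a x y : G) :
    nm.toFun (gg.add (gg.neg (gg.add a x)) (gg.add a y)) = nm.toFun (gg.add (gg.neg x) y) := by
  rw [toFun_neg_add_add, gg.neg_add_cancel_left]

end Gyronorm

/-- In a normed gyrogroup, the commutative-like condition
`‖(a ⊕ x) ⊕ gyr[a,x](y ⊖ a)‖ = ‖x ⊕ y‖` is equivalent to bi-gyrotranslation
invariance of the gyronorm metric. -/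
theorem commutative_like_iff_bi_invariant {G : Type*} (gg : Gyrogroup G)
    (nm : Gyronorm gg)
    (d : G → G → ℝ) (hd : ∀ x y, d x y = nm.toFun (gg.add (gg.neg x) y)) :
    (∀ a x y, nm.toFun (gg.add (gg.add a x) (gg.gyr a x (gg.add y (gg.neg a)))) =
        nm.toFun (gg.add x y)) ↔
      (∀ a x y, d (gg.add x a) (gg.add y a) = d x y ∧
        d x y = d (gg.add a x) (gg.add a y)) := by
  have left_inv : ∀ a x y, d x y = d (gg.add a x) (gg.add a y) := fun a x y => by
    rw [hd, hd, nm.toFun_neg_add_add_left]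
  have right_inv_iff : ∀ a x y, d (gg.add x a) (gg.add y a) = d x y ↔
      nm.toFun (gg.add (gg.add (gg.neg a) (gg.neg x))
          (gg.gyr (gg.neg a) (gg.neg x) (gg.add y (gg.neg (gg.neg a))))) =
        nm.toFun (gg.add (gg.neg x) y) := fun a x y => by
    rw [hd, hd, nm.toFun_neg_add_add, ← gg.left_gyroassoc, gg.neg_neg]
  constructor
  · exact fun hI a x y => ⟨(right_inv_iff a x y).2 (hI _ _ _), left_inv a x y⟩
  · intro hB a x y
    simpa only [gg.neg_neg] using (right_inv_iff (gg.neg a) (gg.neg x) y).1 (hB _ _ _).1
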